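/- Let J, K ⊆ I be disjoint and P, Q ⊆ I be disjoint. Then σ_{J,K} ∩ σ_{P,Q} = σ_{J∩P, K∩Q}. -/

import Mathlib

/-
By the sign conditions on `C`, a vector of the form `y - C x` with `x, y ≥ 0` and `x, y` of
disjoint supports determines `x` and `y`. Indeed, if `y - C x = y' - C x'` with both pairs of
this kind, put `d = x' - x`; wherever `d > 0` we have `x' > 0`, so `y' = 0` there and
`(C d)_i = -y_i ≤ 0`. Applying the nonnegative inverse of the principal submatrix of `C` on
`{d > 0}` (whose off-diagonal contributions from outside this set only help) gives `d ≤ 0` on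
that set, so it is empty; by symmetry `x = x'`, hence `y = y'`. A point of
`σ_{J,K} ∩ σ_{P,Q}` therefore has one representation, supported in `J ∩ P` and `K ∩ Q`.
-/

open Matrix

/-- The `j`-th simple coroot `α^∨_j := Σ_i C_{ij} e_i`, i.e. the `j`-th column of `C`. -/
def acoroot {n : ℕ} (C : Matrix (Fin n) (Fin n) ℝ) (j : Fin n) : Fin n → ℝ :=
  fun i => C i j

/-- The cone `σ_{J,K}` of nonnegative linear combinations of the `-α^∨_j` (`j ∈ J`)
and the standard basis vectors `e_k` (`k ∈ K`). -/
def sigmaCone {n : ℕ} (C : Matrix (Fin n) (Fin n) ℝ) (J K : Finset (Fin n)) :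
    Set (Fin n → ℝ) :=
  {v | ∃ x y : Fin n → ℝ, (∀ j ∈ J, 0 ≤ x j) ∧ (∀ k ∈ K, 0 ≤ y k) ∧
    v = (∑ j ∈ J, x j • (-acoroot C j)) + ∑ k ∈ K, y k • (Pi.single k 1 : Fin n → ℝ)}

namespace Matrix

variable {ι 𝕜 : Type*} [Fintype ι] [DecidableEq ι] [Field 𝕜] [LinearOrder 𝕜]
  [IsStrictOrderedRing 𝕜]

def IsInversePositive (M : Matrix ι ι 𝕜) : Prop :=
  IsUnit M ∧ ∀ i j, 0 ≤ M⁻¹ i j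

theorem IsInversePositive.nonpos_of_mulVec_nonpos {M : Matrix ι ι 𝕜}
    (hM : M.IsInversePositive) {u : ι → 𝕜} (hu : M *ᵥ u ≤ 0) : u ≤ 0 := by
  have hinv : M⁻¹ * M = 1 := nonsing_inv_mul M ((isUnit_iff_isUnit_det M).mp hM.1)
  have hu_eq : u = M⁻¹ *ᵥ (M *ᵥ u) := by rw [mulVec_mulVec, hinv, one_mulVec]
  intro i
  rw [hu_eq]
  exact Finset.sum_nonpos fun j _ => mul_nonpos_of_nonneg_of_nonpos (hM.2 i j) (hu j)

theorem submatrix_mulVec_le_mulVec {C : Matrix ι ι 𝕜} (hoff : ∀ i j, i ≠ j → C i j ≤ 0)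
    (T : Finset ι) {d : ι → 𝕜} (hd : ∀ j ∉ T, d j ≤ 0) (i : T) :
    (C.submatrix (Subtype.val : T → ι) Subtype.val *ᵥ fun j : T => d j) i ≤
      (C *ᵥ d) i := by
  have hrest : 0 ≤ ∑ j ∈ Tᶜ, C i j * d j := by
    refine Finset.sum_nonneg fun j hj => mul_nonneg_of_nonpos_of_nonpos ?_ (hd j ?_)
    · exact hoff _ _ fun h => Finset.mem_compl.mp hj (h ▸ i.2)
    · exact Finset.mem_compl.mp hj
  calc (C.submatrix (Subtype.val : T → ι) Subtype.val *ᵥ fun j : T => d j) i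
      = ∑ j ∈ T, C i j * d j := Finset.sum_coe_sort T fun j => C i j * d j
    _ ≤ ∑ j ∈ T, C i j * d j + ∑ j ∈ Tᶜ, C i j * d j := le_add_of_nonneg_right hrest
    _ = (C *ᵥ d) i := Finset.sum_add_sum_compl T _

theorem nonpos_of_mulVec_nonpos_of_pos {C : Matrix ι ι 𝕜}
    (hoff : ∀ i j, i ≠ j → C i j ≤ 0)
    (hprin : ∀ S : Finset ι, S.Nonempty →
      (C.submatrix (Subtype.val : S → ι) Subtype.val).IsInversePositive)
    {d : ι → 𝕜} (hd : ∀ i, 0 < d i → (C *ᵥ d) i ≤ 0) : d ≤ 0 := by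
  by_contra hneg
  obtain ⟨i₀, hi₀⟩ : ∃ i, 0 < d i := by simpa [Pi.le_def] using hneg
  set T := Finset.univ.filter fun i => 0 < d i
  have hT : ∀ i : T, 0 < d i := fun i => (Finset.mem_filter.mp i.2).2
  have hsub : C.submatrix (Subtype.val : T → ι) Subtype.val *ᵥ (fun j : T => d j) ≤ 0 :=
    fun i =>
    (submatrix_mulVec_le_mulVec hoff T (fun j hj => by simpa [T] using hj) i).trans
      (hd i (hT i))
  have hi₀T : i₀ ∈ T := by simpa [T] using hi₀
  exact (hT ⟨i₀, hi₀T⟩).not_ge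
    ((hprin T ⟨i₀, hi₀T⟩).nonpos_of_mulVec_nonpos hsub ⟨i₀, hi₀T⟩)

theorem le_of_sub_mulVec_eq {C : Matrix ι ι 𝕜}
    (hoff : ∀ i j, i ≠ j → C i j ≤ 0)
    (hprin : ∀ S : Finset ι, S.Nonempty →
      (C.submatrix (Subtype.val : S → ι) Subtype.val).IsInversePositive)
    {x y x' y' : ι → 𝕜} (hx : 0 ≤ x) (hy : 0 ≤ y) (hxy' : ∀ i, x' i = 0 ∨ y' i = 0)
    (h : y - C *ᵥ x = y' - C *ᵥ x') : x' ≤ x := by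
  have hC : C *ᵥ (x' - x) = y' - y := by
    rw [mulVec_sub]
    linear_combination h
  have hd := nonpos_of_mulVec_nonpos_of_pos hoff hprin (d := x' - x) fun i hi => by
    have hy'i : y' i = 0 := (hxy' i).resolve_left fun h0 => by
      simp only [Pi.sub_apply, h0] at hi
      linarith [show 0 ≤ x i from hx i]
    simpa [hC, hy'i] using hy i
  exact fun i => sub_nonpos.mp (hd i)

end Matrix

lemma sum_smul_neg_acoroot {n : ℕ} (C : Matrix (Fin n) (Fin n) ℝ) (J : Finset (Fin n))
    (x : Fin n → ℝ) : ∑ j ∈ J, x j • (-acoroot C j) = -(C *ᵥ J.piecewise x 0) := by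
  ext i
  simp [Finset.sum_apply, acoroot, mulVec, dotProduct, Finset.piecewise, mul_comm]

lemma sum_smul_single_one {n : ℕ} (K : Finset (Fin n)) (y : Fin n → ℝ) :
    ∑ k ∈ K, y k • (Pi.single k 1 : Fin n → ℝ) = K.piecewise y 0 := by
  ext i
  simp [Finset.sum_apply, Pi.single_apply, Finset.piecewise]

lemma piecewise_zero_eq_self {ι α : Type*} [DecidableEq ι] [Zero α] {s : Finset ι}
    {f : ι → α} (hf : ∀ i ∉ s, f i = 0) : s.piecewise f 0 = f := by
  ext i
  by_cases hi : i ∈ s <;> simp [hi, hf]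

lemma piecewise_zero_nonneg {ι α : Type*} [DecidableEq ι] [Preorder α] [Zero α] (s : Finset ι)
    {f : ι → α} (hf : ∀ i ∈ s, 0 ≤ f i) : 0 ≤ s.piecewise f 0 := fun i => by
  by_cases hi : i ∈ s <;> simp [hi, hf]

theorem mem_sigmaCone_iff {n : ℕ} (C : Matrix (Fin n) (Fin n) ℝ) (J K : Finset (Fin n))
    (v : Fin n → ℝ) :
    v ∈ sigmaCone C J K ↔ ∃ x y : Fin n → ℝ, 0 ≤ x ∧ 0 ≤ y ∧
      (∀ i ∉ J, x i = 0) ∧ (∀ i ∉ K, y i = 0) ∧ v = y - C *ᵥ x := by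
  constructor
  · rintro ⟨x, y, hx, hy, rfl⟩
    refine ⟨J.piecewise x 0, K.piecewise y 0, piecewise_zero_nonneg J hx,
      piecewise_zero_nonneg K hy, fun i hi => by simp [hi], fun i hi => by simp [hi], ?_⟩
    rw [sum_smul_neg_acoroot, sum_smul_single_one, sub_eq_neg_add]
  · rintro ⟨x, y, hx, hy, hxJ, hyK, rfl⟩
    refine ⟨x, y, fun j _ => hx j, fun k _ => hy k, ?_⟩
    rw [sum_smul_neg_acoroot, sum_smul_single_one, piecewise_zero_eq_self hxJ,
      piecewise_zero_eq_self hyK, sub_eq_neg_add]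

theorem sigmaCone_mono {n : ℕ} (C : Matrix (Fin n) (Fin n) ℝ) {J K J' K' : Finset (Fin n)}
    (hJ : J ⊆ J') (hK : K ⊆ K') : sigmaCone C J K ⊆ sigmaCone C J' K' := by
  intro v hv
  obtain ⟨x, y, hx, hy, hxJ, hyK, rfl⟩ := (mem_sigmaCone_iff C J K v).mp hv
  exact (mem_sigmaCone_iff C J' K' _).mpr
    ⟨x, y, hx, hy, fun i hi => hxJ i (hi <| hJ ·), fun i hi => hyK i (hi <| hK ·), rfl⟩

lemma eq_zero_or_eq_zero_of_disjoint {ι α β : Type*} [Zero α] [Zero β] {s t : Finset ι}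
    (hst : Disjoint s t) {f : ι → α} {g : ι → β} (hf : ∀ i ∉ s, f i = 0)
    (hg : ∀ i ∉ t, g i = 0) (i : ι) :
    f i = 0 ∨ g i = 0 := by
  by_cases hi : i ∈ s
  · exact Or.inr (hg i (Finset.disjoint_left.mp hst hi))
  · exact Or.inl (hf i hi)

theorem stmt_2_general
    (n : ℕ) (C : Matrix (Fin n) (Fin n) ℝ)
    (hoff : ∀ i j, i ≠ j → C i j ≤ 0)
    (hprin : ∀ S : Finset (Fin n), S.Nonempty →
      IsUnit (C.submatrix (fun a : S => (a : Fin n)) (fun a : S => (a : Fin n))) ∧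
      ∀ i j : S,
        0 ≤ (C.submatrix (fun a : S => (a : Fin n)) (fun a : S => (a : Fin n)))⁻¹ i j)
    (J K : Finset (Fin n)) (hJK : Disjoint J K)
    (P Q : Finset (Fin n)) (hPQ : Disjoint P Q) :
    sigmaCone C J K ∩ sigmaCone C P Q = sigmaCone C (J ∩ P) (K ∩ Q) := by
  refine subset_antisymm ?_ (Set.subset_inter
    (sigmaCone_mono C Finset.inter_subset_left Finset.inter_subset_left)
    (sigmaCone_mono C Finset.inter_subset_right Finset.inter_subset_right))
  rintro v ⟨hvJK, hvPQ⟩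
  obtain ⟨x, y, hx, hy, hxJ, hyK, rfl⟩ := (mem_sigmaCone_iff C J K v).mp hvJK
  obtain ⟨x', y', hx', hy', hxP, hyQ, hv⟩ := (mem_sigmaCone_iff C P Q _).mp hvPQ
  obtain rfl : x = x' := le_antisymm
    (le_of_sub_mulVec_eq hoff hprin hx' hy'
      (eq_zero_or_eq_zero_of_disjoint hJK hxJ hyK) hv.symm)
    (le_of_sub_mulVec_eq hoff hprin hx hy (eq_zero_or_eq_zero_of_disjoint hPQ hxP hyQ) hv)
  obtain rfl : y = y' := sub_left_inj.mp hv
  refine (mem_sigmaCone_iff C _ _ _).mpr ⟨x, y, hx, hy, fun i hi => ?_, fun i hi => ?_, rfl⟩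
  · by_cases hiJ : i ∈ J
    exacts [hxP i fun hiP => hi (Finset.mem_inter.mpr ⟨hiJ, hiP⟩), hxJ i hiJ]
  · by_cases hiK : i ∈ K
    exacts [hyQ i fun hiQ => hi (Finset.mem_inter.mpr ⟨hiK, hiQ⟩), hyK i hiK]

theorem stmt_2
    (n : ℕ) (hn : 1 ≤ n) (C : Matrix (Fin n) (Fin n) ℝ)
    (hdiag : ∀ i, C i i = 2)
    (hoff : ∀ i j, i ≠ j → C i j ≤ 0)
    (hprin : ∀ S : Finset (Fin n), S.Nonempty →
      IsUnit (C.submatrix (fun a : S => (a : Fin n)) (fun a : S => (a : Fin n))) ∧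
      ∀ i j : S,
        0 ≤ (C.submatrix (fun a : S => (a : Fin n)) (fun a : S => (a : Fin n)))⁻¹ i j)
    (J K : Finset (Fin n)) (hJK : Disjoint J K)
    (P Q : Finset (Fin n)) (hPQ : Disjoint P Q) :
    sigmaCone C J K ∩ sigmaCone C P Q = sigmaCone C (J ∩ P) (K ∩ Q) :=
  stmt_2_general n C hoff hprin J K hJK P Q hPQ
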